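/- Let m ≥ 1, S = T = L^m ⊆ (Z/4Z)^{2m}, S₀ = ∪{E_{m,i} : i ≡ m mod 2}, S₁ = ∪{E_{m,i} : i ≢ m mod 2}, S' = ({0}×S₀) ∪ ({1}×S₁) and T' = ({0}×T) ∪ ({1}×(−T)) in Z/2Z × (Z/4Z)^{2m}. Then S' and T' form a formally dual pair in Z/2Z × (Z/4Z)^{2m}, with |S'| = 2^{2m} and |T'| = 2^{2m+1}. -/

import Mathlib

open Finset

abbrev G4 : Type := ZMod 4 × ZMod 4

/-- The character `χ_y(x) = i^(y·x)` on `(ℤ/4ℤ)²`. -/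
noncomputable def chi (y x : G4) : ℂ := Complex.I ^ (y.1 * x.1 + y.2 * x.2).val

/-- The character `χ_z` on `((ℤ/4ℤ)²)^m`. -/
noncomputable def chiV {m : ℕ} (z x : Fin m → G4) : ℂ := ∏ i, chi (z i) (x i)

/-- The character `φ_{(w,z)}(a,x) = (-1)^{wa} χ_z(x)` on `ℤ/2ℤ × ((ℤ/4ℤ)²)^m`. -/
noncomputable def phi {m : ℕ} (y q : ZMod 2 × (Fin m → G4)) : ℂ :=
  (-1 : ℂ) ^ (y.1 * q.1).val * chiV y.2 q.2

def L : Finset G4 := {(0,0),(0,1),(1,0),(3,3)}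

def L1 : Finset G4 := {(0,0),(0,1),(1,0)}

def L2 : Finset G4 := {(3,3)}

/-- The number of coordinates of `z` lying in `A`. -/
def cnt {m : ℕ} (A : Finset G4) (z : Fin m → G4) : ℕ :=
  (univ.filter fun i => z i ∈ A).card

/-- `E_{m,i}`: the union of all products of `i` copies of `L₁` and `m - i` copies of `L₂`. -/
def E (m i : ℕ) : Finset (Fin m → G4) :=
  univ.filter fun x => (∀ j, x j ∈ L1 ∪ L2) ∧ cnt L1 x = i

/-- `S₀ = ∪ {E_{m,i} : i ≡ m (mod 2)}`. -/
def S0 (m : ℕ) : Finset (Fin m → G4) :=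
  ((range (m + 1)).filter fun i => i % 2 = m % 2).biUnion (E m)

/-- `S₁ = ∪ {E_{m,i} : i ≢ m (mod 2)}`. -/
def S1 (m : ℕ) : Finset (Fin m → G4) :=
  ((range (m + 1)).filter fun i => ¬ i % 2 = m % 2).biUnion (E m)

/-- `T = L^m ⊆ ((ℤ/4ℤ)²)^m`. -/
def Tm (m : ℕ) : Finset (Fin m → G4) := Fintype.piFinset fun _ => L

/-- `S' = ({0} × S₀) ∪ ({1} × S₁)`. -/
def S' (m : ℕ) : Finset (ZMod 2 × (Fin m → G4)) :=
  (({0} : Finset (ZMod 2)) ×ˢ S0 m) ∪ (({1} : Finset (ZMod 2)) ×ˢ S1 m)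

/-- `T' = ({0} × T) ∪ ({1} × (-T))`. -/
def T' (m : ℕ) : Finset (ZMod 2 × (Fin m → G4)) :=
  (({0} : Finset (ZMod 2)) ×ˢ Tm m) ∪
    (({1} : Finset (ZMod 2)) ×ˢ (Tm m).image fun t => -t)

/-- `ν_A(y)`, the number of pairs `(a,b) ∈ A × A` with `a - b = y`. -/
def nu {G : Type*} [AddCommGroup G] [DecidableEq G] (A : Finset G) (y : G) : ℕ :=
  ((A ×ˢ A).filter fun p => p.1 - p.2 = y).card

/-!
Summing `φ_{(w,z)}` over `S'` is the same as summing `χ_z` over `T = L^m` with the weight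
`∏ⱼ signL2 w (xⱼ)`: the parity condition defining `S₀` and `S₁` says exactly that this product is
`1` on `S₀` and `(-1)^w` on `S₁`. The weighted sum therefore factors over the coordinates. On the
other side, `ν_{T'}(0,z) = 2 ν_T(z)` and `ν_{T'}(1,z) = r_T(z) + r_T(-z)`, where `r_T = addRepr T`
counts the ways to write an element as a sum of two elements of `T`; both `ν_T` and `r_T` factor
over the coordinates as well. Everything thus reduces to identities on `(ℤ/4ℤ)²`, which are
finite checks.
-/

lemma sum_zero_one_product {β M : Type*} [DecidableEq β] [AddCommMonoid M] (X Y : Finset β)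
    (f : ZMod 2 × β → M) :
    ∑ q ∈ ({0} : Finset (ZMod 2)) ×ˢ X ∪ ({1} : Finset (ZMod 2)) ×ˢ Y, f q
      = ∑ x ∈ X, f (0, x) + ∑ y ∈ Y, f (1, y) := by
  rw [sum_union (disjoint_product.2 (Or.inl (by simp))), sum_product, sum_product,
    sum_singleton, sum_singleton]

section PairCounts

variable {H : Type*} [AddCommGroup H] [DecidableEq H]

def addRepr (A : Finset H) (y : H) : ℕ := #{b ∈ A | y - b ∈ A}

def signedDouble (A : Finset H) : Finset (ZMod 2 × H) :=
  ({0} : Finset (ZMod 2)) ×ˢ A ∪ ({1} : Finset (ZMod 2)) ×ˢ A.image fun t => -t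

lemma nu_eq_card_filter (A : Finset H) (y : H) : nu A y = #{b ∈ A | b + y ∈ A} := by
  refine card_bij' (fun p _ => p.2) (fun b _ => (b + y, b)) ?_ ?_ ?_ ?_
  · rintro ⟨a, b⟩ h
    rw [mem_filter, mem_product, sub_eq_iff_eq_add'] at h
    exact mem_filter.2 ⟨h.1.2, h.2 ▸ h.1.1⟩
  · intro b hb
    rw [mem_filter] at hb
    simp [hb.1, hb.2]
  · rintro ⟨a, b⟩ h
    rw [mem_filter, sub_eq_iff_eq_add'] at h
    exact Prod.ext h.2.symm rfl
  · intro b _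
    rfl

lemma nu_neg (A : Finset H) (y : H) : nu A (-y) = nu A y := by
  refine card_nbij' Prod.swap Prod.swap ?_ ?_ (fun _ _ => rfl) (fun _ _ => rfl) <;>
  · rintro ⟨a, b⟩ h
    simp only [coe_filter, mem_product, Set.mem_ofPred_eq, Prod.fst_swap, Prod.snd_swap] at h ⊢
    exact ⟨h.1.symm, by simp [← neg_sub a b, h.2]⟩

lemma mem_signedDouble {A : Finset H} {w : ZMod 2} {x : H} :
    (w, x) ∈ signedDouble A ↔ w = 0 ∧ x ∈ A ∨ w = 1 ∧ -x ∈ A := by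
  simp [signedDouble, neg_eq_iff_eq_neg, eq_comm (a := w), and_comm]

lemma card_filter_signedDouble (A : Finset H) (P : ZMod 2 × H → Prop) [DecidablePred P] :
    #{q ∈ signedDouble A | P q} = #{a ∈ A | P (0, a)} + #{a ∈ A | P (1, -a)} := by
  rw [signedDouble, filter_union, card_union_of_disjoint, singleton_product, singleton_product,
    filter_map, filter_map, card_map, card_map, filter_image,
    card_image_of_injective _ neg_injective]
  · rfl
  · exact disjoint_filter_filter (disjoint_product.2 (Or.inl (by simp)))

lemma card_signedDouble (A : Finset H) : #(signedDouble A) = 2 * #A := by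
  simpa [two_mul] using card_filter_signedDouble A fun _ => True

lemma nu_signedDouble_zero (A : Finset H) (z : H) :
    nu (signedDouble A) (0, z) = 2 * nu A z := by
  rw [nu_eq_card_filter, card_filter_signedDouble]
  simp [mem_signedDouble, add_comm (-z), ← nu_eq_card_filter, nu_neg, two_mul]

lemma nu_signedDouble_one (A : Finset H) (z : H) :
    nu (signedDouble A) (1, z) = addRepr A z + addRepr A (-z) := by
  rw [nu_eq_card_filter, card_filter_signedDouble]
  simp [mem_signedDouble, addRepr, sub_eq_add_neg, add_comm,
    show (1 + 1 : ZMod 2) = 0 from rfl]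

end PairCounts

section PiFinset

variable {ι : Type*} [Fintype ι] [DecidableEq ι]

open Fintype

lemma card_filter_piFinset_forall {α : ι → Type*} (A : ∀ i, Finset (α i))
    (P : ∀ i, α i → Prop) [∀ i, DecidablePred (P i)] :
    #{x ∈ piFinset A | ∀ i, P i (x i)} = ∏ i, #{a ∈ A i | P i a} := by
  rw [← card_piFinset]
  congr 1
  ext x
  simp [forall_and]

variable {H : Type*} [AddCommGroup H] [DecidableEq H]

lemma nu_piFinset (A : ι → Finset H) (z : ι → H) :
    nu (piFinset A) z = ∏ i, nu (A i) (z i) := by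
  simp only [nu_eq_card_filter, ← card_filter_piFinset_forall, mem_piFinset, Pi.add_apply]

lemma addRepr_piFinset (A : ι → Finset H) (z : ι → H) :
    addRepr (piFinset A) z = ∏ i, addRepr (A i) (z i) := by
  simp only [addRepr, ← card_filter_piFinset_forall, mem_piFinset, Pi.sub_apply]

end PiFinset

def signL2 (w : ZMod 2) (u : G4) : ℤ := if u ∈ L1 then 1 else (-1) ^ w.val

/-- `chi` with values in `ℤ[i]`, where the identities below can be decided. -/
def chiZ (y x : G4) : GaussianInt := ⟨0, 1⟩ ^ (y.1 * x.1 + y.2 * x.2).val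

lemma chi_eq_chiZ (y x : G4) : chi y x = chiZ y x := by
  simp [chi, chiZ, GaussianInt.toComplex_def']

lemma norm_sum_L_signL2_zero_chiZ :
    ∀ v : G4, (∑ u ∈ L, (signL2 0 u : GaussianInt) * chiZ v u).norm = 4 * nu L v := by
  decide

lemma norm_sum_L_signL2_one_chiZ :
    ∀ v : G4, (∑ u ∈ L, (signL2 1 u : GaussianInt) * chiZ v u).norm = 4 * addRepr L v := by
  decide

lemma addRepr_L_neg : ∀ v : G4, addRepr L (-v) = addRepr L v := by
  decide

lemma normSq_sum_L (w : ZMod 2) (v : G4) :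
    Complex.normSq (∑ u ∈ L, (signL2 w u : ℂ) * chi v u)
      = ((∑ u ∈ L, (signL2 w u : GaussianInt) * chiZ v u).norm : ℝ) := by
  simp [GaussianInt.intCast_real_norm, map_sum, chi_eq_chiZ]

lemma cnt_le {m : ℕ} (A : Finset G4) (x : Fin m → G4) : cnt A x ≤ m := by
  simpa [cnt] using card_filter_le univ fun i => x i ∈ A

lemma biUnion_E_eq_filter (m : ℕ) (p : ℕ → Prop) [DecidablePred p] :
    {i ∈ range (m + 1) | p i}.biUnion (E m) = {x ∈ Tm m | p (cnt L1 x)} := by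
  have hL : L1 ∪ L2 = L := by decide
  ext x
  simp only [E, Tm, hL, mem_biUnion, mem_filter, mem_range, mem_univ, true_and,
    Fintype.mem_piFinset]
  constructor
  · rintro ⟨i, ⟨-, hi⟩, hx, rfl⟩
    exact ⟨hx, hi⟩
  · rintro ⟨hx, hp⟩
    exact ⟨cnt L1 x, ⟨Nat.lt_succ_of_le (cnt_le L1 x), hp⟩, hx, rfl⟩

lemma prod_signL2 {m : ℕ} (w : ZMod 2) (x : Fin m → G4) :
    ∏ j, (signL2 w (x j) : ℂ) = if cnt L1 x % 2 = m % 2 then 1 else (-1) ^ w.val := by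
  have hcard : #{j | x j ∉ L1} = m - cnt L1 x := by
    have := card_filter_add_card_filter_not (s := univ) fun j => x j ∈ L1
    simp only [card_univ, Fintype.card_fin] at this
    rw [cnt]
    omega
  simp only [signL2, apply_ite (Int.cast : ℤ → ℂ), Int.cast_one, Int.cast_pow, Int.cast_neg]
  rw [prod_ite, prod_const_one, one_mul, prod_const, hcard, ← pow_mul, mul_comm, pow_mul]
  have hle := cnt_le L1 x
  split_ifs with h
  · rw [Even.neg_one_pow (by rw [Nat.even_sub hle, Nat.even_iff, Nat.even_iff]; omega), one_pow]
  · rw [Odd.neg_one_pow (by rw [Nat.odd_sub hle, Nat.odd_iff, Nat.even_iff]; omega)]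

lemma sum_S'_phi {m : ℕ} (w : ZMod 2) (z : Fin m → G4) :
    ∑ q ∈ S' m, phi (w, z) q = ∏ j, ∑ u ∈ L, (signL2 w u : ℂ) * chi (z j) u := by
  rw [S', sum_zero_one_product, S0, S1, biUnion_E_eq_filter, biUnion_E_eq_filter, prod_univ_sum]
  change _ = ∑ x ∈ Tm m, _
  rw [← sum_filter_add_sum_filter_not (Tm m) fun x => cnt L1 x % 2 = m % 2]
  congr 1 <;> refine sum_congr rfl fun x hx => ?_ <;> rw [mem_filter] at hx <;>
    simp [phi, chiV, prod_mul_distrib, prod_signL2, hx.2]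

lemma card_Tm (m : ℕ) : #(Tm m) = 4 ^ m := by
  simp [Tm, show #L = 4 from rfl]

lemma card_S' (m : ℕ) : #(S' m) = 2 ^ (2 * m) := by
  rw [card_eq_sum_ones, S', sum_zero_one_product, ← card_eq_sum_ones, ← card_eq_sum_ones,
    S0, S1, biUnion_E_eq_filter, biUnion_E_eq_filter, card_filter_add_card_filter_not,
    card_Tm, pow_mul]
  norm_num

lemma T'_eq_signedDouble (m : ℕ) : T' m = signedDouble (Tm m) := rfl

lemma card_T' (m : ℕ) : #(T' m) = 2 ^ (2 * m + 1) := by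
  rw [T'_eq_signedDouble, card_signedDouble, card_Tm, pow_succ, pow_mul]
  norm_num [mul_comm]

lemma nu_T'_zero {m : ℕ} (z : Fin m → G4) : nu (T' m) (0, z) = 2 * ∏ j, nu L (z j) := by
  rw [T'_eq_signedDouble, nu_signedDouble_zero, Tm, nu_piFinset]

lemma nu_T'_one {m : ℕ} (z : Fin m → G4) : nu (T' m) (1, z) = 2 * ∏ j, addRepr L (z j) := by
  rw [T'_eq_signedDouble, nu_signedDouble_one, Tm, addRepr_piFinset, addRepr_piFinset, two_mul]
  simp [addRepr_L_neg]

theorem stmt19_general (m : ℕ) :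
    (∀ y : ZMod 2 × (Fin m → G4),
      Complex.normSq (∑ q ∈ S' m, phi y q)
        = ((S' m).card : ℝ) ^ 2 / ((T' m).card : ℝ) * (nu (T' m) y : ℝ)) ∧
    (S' m).card = 2 ^ (2 * m) ∧ (T' m).card = 2 ^ (2 * m + 1) := by
  refine ⟨?_, card_S' m, card_T' m⟩
  rintro ⟨w, z⟩
  obtain ⟨c, hnormSq, hnu⟩ : ∃ c : Fin m → ℕ,
      Complex.normSq (∑ q ∈ S' m, phi (w, z) q) = ∏ j, 4 * (c j : ℝ) ∧
        nu (T' m) (w, z) = 2 * ∏ j, c j := by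
    simp_rw [sum_S'_phi, map_prod, normSq_sum_L]
    obtain rfl | rfl : w = 0 ∨ w = 1 := by revert w; decide
    · exact ⟨fun j => nu L (z j), by
        simp only [norm_sum_L_signL2_zero_chiZ, Int.cast_mul, Int.cast_ofNat, Int.cast_natCast],
        nu_T'_zero z⟩
    · exact ⟨fun j => addRepr L (z j), by
        simp only [norm_sum_L_signL2_one_chiZ, Int.cast_mul, Int.cast_ofNat, Int.cast_natCast],
        nu_T'_one z⟩
  rw [hnormSq, hnu, card_S', card_T', prod_mul_distrib, prod_const, card_univ, Fintype.card_fin]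
  push_cast
  rw [show (4 : ℝ) ^ m = 2 ^ (2 * m) by rw [pow_mul]; norm_num]
  field_simp
  ring

/-- `S'` and `T'` form a formally dual pair in `ℤ/2ℤ × (ℤ/4ℤ)^{2m}`,
with `|S'| = 2^{2m}` and `|T'| = 2^{2m+1}`. -/
theorem stmt19 (m : ℕ) (hm : 1 ≤ m) :
    (∀ y : ZMod 2 × (Fin m → G4),
      Complex.normSq (∑ q ∈ S' m, phi y q)
        = ((S' m).card : ℝ) ^ 2 / ((T' m).card : ℝ) * (nu (T' m) y : ℝ)) ∧
    (S' m).card = 2 ^ (2 * m) ∧ (T' m).card = 2 ^ (2 * m + 1) :=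
  stmt19_general m
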